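/- Let (G_n, δ_n)_{n∈ℕ} be a sequence of proper metric groups with identity elements e_n such that for all ε > 0 there exist ω > 0 and N ∈ ℕ with: for all n ≥ N and g, h ∈ G_n, δ_n(g,h) < ω implies δ_n(g⁻¹, h⁻¹) < ε. Suppose for each n ∈ ℕ there are ε_n > 0 with Σ_{n=0}^∞ ε_n < ∞ and a (1/ε_n)-local ε_n-almost isometric isomorphism (ς_n, κ_n) from (G_n,δ_n) to (G_{n+1},δ_{n+1}). For k > n set ς_n^k = ς_{k-1} ∘ ⋯ ∘ ς_n, and let H_∞ be the set of regular sequences (g_n)_{n∈ℕ} such that for every ε > 0 there exists N ∈ ℕ with δ_j(g_j, ς_n^j(g_n)) < ε for all n ≥ N and all j > n. Then H_∞ is closed under pointwise inverses: if (g_n)_{n∈ℕ} ∈ H_∞ then (g_n⁻¹)_{n∈ℕ} ∈ H_∞. -/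

import Mathlib

/-!
Inversion is asymptotically uniformly equicontinuous and left translations are isometries, so
`h g_n⁻¹ = (g_n h⁻¹)⁻¹` makes `(g_n⁻¹)` regular. For coherence, a single almost isometric
isomorphism `ς` places `ς b` at most `3ε` further from `(ς a)⁻¹` than `b` is from `a⁻¹`, as long as
`a`, `b` and `ς a⁻¹` lie in the ball of radius `r`. Along `ς_n^{n+k}` the distances to the identity
grow by at most `Σ_{i ≥ n} ε_i`, which stays far below the radii `1/ε_i` once `n` is large, so
`ς_n^j(g_n⁻¹)` is within `3 Σ_{i ≥ n} ε_i` of `ς_n^j(g_n)⁻¹`; the latter is close to `g_j⁻¹` by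
coherence of `(g_n)` and equicontinuity of inversion.
-/

/-- `(ς, κ)` is an `r`-local `ε`-almost isometric isomorphism between the metric
monoids `G` and `H`. -/
def IsLocAlmostIsoIso {G H : Type*} [Monoid G] [MetricSpace G] [Monoid H] [MetricSpace H]
    (ς : G → H) (κ : H → G) (ε r : ℝ) : Prop :=
  ς 1 = 1 ∧ κ 1 = 1 ∧
    (∀ g ∈ Metric.closedBall (1 : G) r, ∀ g' ∈ Metric.closedBall (1 : G) r,
      ∀ h ∈ Metric.closedBall (1 : H) r,
        |dist (ς g * ς g') h - dist (g * g') (κ h)| ≤ ε) ∧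
    (∀ g ∈ Metric.closedBall (1 : H) r, ∀ g' ∈ Metric.closedBall (1 : H) r,
      ∀ h ∈ Metric.closedBall (1 : G) r,
        |dist (κ g * κ g') h - dist (g * g') (ς h)| ≤ ε)
/-- A sequence through a sequence of metric monoids is bounded when
`sup_n δ_n(e_n, g_n) < ∞`. -/
def BoundedSeq {G : ℕ → Type*} [∀ n, Monoid (G n)] [∀ n, MetricSpace (G n)]
    (g : ∀ n, G n) : Prop :=
  ∃ M : ℝ, ∀ n, dist (1 : G n) (g n) ≤ M

/-- A bounded sequence is regular when the right translations by its terms are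
asymptotically uniformly equicontinuous. -/
def RegularSeq {G : ℕ → Type*} [∀ n, Monoid (G n)] [∀ n, MetricSpace (G n)]
    (g : ∀ n, G n) : Prop :=
  BoundedSeq g ∧
    ∀ ε : ℝ, 0 < ε → ∃ ω : ℝ, 0 < ω ∧ ∃ N : ℕ, ∀ n, N ≤ n → ∀ h k : G n,
      dist h k < ω → dist (h * g n) (k * g n) < ε
/-- The compositions `ς_n^{n+k} = ς_{n+k-1} ∘ ⋯ ∘ ς_n`. -/
def compMap {G : ℕ → Type*} (ς : ∀ n, G n → G (n + 1)) (n : ℕ) :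
    ∀ k : ℕ, G n → G (n + k)
  | 0 => fun g => g
  | k + 1 => fun g => ς (n + k) (compMap ς n k g)

/-- The map `ς_n^j = ς_{j-1} ∘ ⋯ ∘ ς_n : G_n → G_j` for `n ≤ j`. -/
def sigmaComp {G : ℕ → Type*} (ς : ∀ n, G n → G (n + 1)) {n j : ℕ} (h : n ≤ j)
    (g : G n) : G j :=
  cast (congrArg G (Nat.add_sub_cancel' h)) (compMap ς n (j - n) g)

/-- Membership in `H_∞`: regular sequences which are asymptotically coherent with the
maps `ς`. -/
def MemHInf {G : ℕ → Type*} [∀ n, Monoid (G n)] [∀ n, MetricSpace (G n)]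
    (ς : ∀ n, G n → G (n + 1)) (g : ∀ n, G n) : Prop :=
  RegularSeq g ∧
    ∀ ε : ℝ, 0 < ε → ∃ N : ℕ, ∀ n, N ≤ n → ∀ j : ℕ, ∀ hnj : n < j,
      dist (g j) (sigmaComp ς hnj.le (g n)) < ε

open Filter Finset

lemma dist_one_inv_of_left_invariant {G : Type*} [Group G] [MetricSpace G]
    (hleft : ∀ g h k : G, dist (g * h) (g * k) = dist h k) (x : G) :
    dist 1 x⁻¹ = dist 1 x := by
  rw [← hleft x, mul_one, mul_inv_cancel, dist_comm]

lemma dist_self_le_of_dist_le {K L : Type*} [PseudoMetricSpace K] [PseudoMetricSpace L] {a b : L}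
    {r : ℝ} (h : dist a b ≤ r) (c : K) : dist c c ≤ r :=
  (dist_self c).le.trans (dist_nonneg.trans h)

namespace IsLocAlmostIsoIso

variable {G H : Type*} [Group G] [MetricSpace G] [Group H] [MetricSpace H]
  {ς : G → H} {κ : H → G} {e r : ℝ}

lemma abs_dist_sub_le (hiso : IsLocAlmostIsoIso ς κ e r) {g g' : G} {h : H}
    (hg : dist 1 g ≤ r) (hg' : dist 1 g' ≤ r) (hh : dist 1 h ≤ r) :
    |dist (ς g * ς g') h - dist (g * g') (κ h)| ≤ e :=
  hiso.2.2.1 g (Metric.mem_closedBall'.2 hg) g' (Metric.mem_closedBall'.2 hg') h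
    (Metric.mem_closedBall'.2 hh)

lemma abs_dist_sub_le' (hiso : IsLocAlmostIsoIso ς κ e r) {g g' : H} {h : G}
    (hg : dist 1 g ≤ r) (hg' : dist 1 g' ≤ r) (hh : dist 1 h ≤ r) :
    |dist (κ g * κ g') h - dist (g * g') (ς h)| ≤ e :=
  hiso.2.2.2 g (Metric.mem_closedBall'.2 hg) g' (Metric.mem_closedBall'.2 hg') h
    (Metric.mem_closedBall'.2 hh)

lemma dist_one_map_le (hiso : IsLocAlmostIsoIso ς κ e r) {x : G} (hx : dist 1 x ≤ r) :
    dist 1 (ς x) ≤ dist 1 x + e := by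
  have key := abs_le.mp
    (hiso.abs_dist_sub_le hx (dist_self_le_of_dist_le hx 1) (dist_self_le_of_dist_le hx 1))
  rw [hiso.1, hiso.2.1, mul_one, mul_one, dist_comm, dist_comm x] at key
  linarith [key.2]

lemma dist_map_le (hiso : IsLocAlmostIsoIso ς κ e r) {x : G} {y : H}
    (hx : dist 1 x ≤ r) (hy : dist 1 y ≤ r) :
    dist (ς x) y ≤ dist x (κ y) + e := by
  have key := abs_le.mp (hiso.abs_dist_sub_le hx (dist_self_le_of_dist_le hx 1) hy)
  rw [hiso.1, mul_one, mul_one] at key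
  linarith [key.2]

lemma dist_inv_map_map_le (hiso : IsLocAlmostIsoIso ς κ e r) {x : G}
    (hx : dist 1 x ≤ r) (hςx : dist 1 (ς x) ≤ r) :
    dist x (κ (ς x)) ≤ e := by
  have key := abs_le.mp (hiso.abs_dist_sub_le' hςx (dist_self_le_of_dist_le hx 1) hx)
  rw [hiso.2.1, mul_one, mul_one, dist_self, dist_comm] at key
  linarith [key.1]

lemma dist_map_inv_le (hiso : IsLocAlmostIsoIso ς κ e r)
    (hleft : ∀ g h k : H, dist (g * h) (g * k) = dist h k) {x : G}
    (hx : dist 1 x ≤ r) (hx' : dist 1 x⁻¹ ≤ r) :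
    dist (ς x⁻¹) (ς x)⁻¹ ≤ e := by
  have key := abs_le.mp (hiso.abs_dist_sub_le hx hx' (dist_self_le_of_dist_le hx 1))
  rw [hiso.2.1, mul_inv_cancel, dist_self, sub_zero] at key
  rw [← hleft (ς x), mul_inv_cancel]
  exact key.2

lemma dist_map_map_inv_le (hiso : IsLocAlmostIsoIso ς κ e r)
    (hleft : ∀ g h k : H, dist (g * h) (g * k) = dist h k) {a b : G}
    (ha : dist 1 a ≤ r) (ha' : dist 1 a⁻¹ ≤ r) (hb : dist 1 b ≤ r) (hςa' : dist 1 (ς a⁻¹) ≤ r) :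
    dist (ς b) (ς a)⁻¹ ≤ dist b a⁻¹ + 3 * e :=
  calc dist (ς b) (ς a)⁻¹ ≤ dist (ς b) (ς a⁻¹) + dist (ς a⁻¹) (ς a)⁻¹ := dist_triangle _ _ _
    _ ≤ (dist b (κ (ς a⁻¹)) + e) + e :=
      add_le_add (hiso.dist_map_le hb hςa') (hiso.dist_map_inv_le hleft ha ha')
    _ ≤ (dist b a⁻¹ + dist a⁻¹ (κ (ς a⁻¹)) + e) + e := by gcongr; exact dist_triangle _ _ _
    _ ≤ dist b a⁻¹ + 3 * e := by linarith [hiso.dist_inv_map_map_le ha' hςa']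

end IsLocAlmostIsoIso

lemma sigmaComp_add {G : ℕ → Type*} (ς : ∀ n, G n → G (n + 1)) {n k : ℕ} (h : n ≤ n + k)
    (x : G n) : sigmaComp ς h x = compMap ς n k x := by
  apply eq_of_heq
  unfold sigmaComp
  refine (cast_heq _ _).trans ?_
  rw [Nat.add_sub_cancel_left]

section compMap

variable {G : ℕ → Type*} [∀ n, Group (G n)] [∀ n, MetricSpace (G n)]
  {ς : ∀ n, G n → G (n + 1)} {κ : ∀ n, G (n + 1) → G n} {e r : ℕ → ℝ}

lemma dist_one_compMap_le (hiso : ∀ m, IsLocAlmostIsoIso (ς m) (κ m) (e m) (r m)) {n : ℕ}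
    {x : G n} (hr : ∀ k, dist 1 x + ∑ i ∈ range k, e (n + i) ≤ r (n + k)) (k : ℕ) :
    dist 1 (compMap ς n k x) ≤ dist 1 x + ∑ i ∈ range k, e (n + i) := by
  induction k with
  | zero => simp [compMap]
  | succ k ih =>
    have hstep := (hiso (n + k)).dist_one_map_le (ih.trans (hr k))
    rw [sum_range_succ]
    exact hstep.trans (by linarith)

lemma dist_compMap_inv_le (hleft : ∀ m, ∀ g h k : G m, dist (g * h) (g * k) = dist h k)
    (hiso : ∀ m, IsLocAlmostIsoIso (ς m) (κ m) (e m) (r m)) (he : ∀ m, 0 ≤ e m) {n : ℕ}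
    {x : G n} (hr : ∀ k, dist 1 x + ∑ i ∈ range (k + 1), e (n + i) ≤ r (n + k)) (k : ℕ) :
    dist (compMap ς n k x⁻¹) (compMap ς n k x)⁻¹ ≤ 3 * ∑ i ∈ range k, e (n + i) := by
  have hr' : ∀ k, dist 1 x + ∑ i ∈ range k, e (n + i) ≤ r (n + k) := fun k => by
    linarith [hr k, sum_range_succ (fun i => e (n + i)) k, he (n + k)]
  have hr'_inv : ∀ k, dist 1 x⁻¹ + ∑ i ∈ range k, e (n + i) ≤ r (n + k) := by
    simpa only [dist_one_inv_of_left_invariant (hleft n) x] using hr'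
  induction k with
  | zero => simp [compMap]
  | succ k ih =>
    set a := compMap ς n k x
    have ha := dist_one_compMap_le hiso hr' k
    have ha' := dist_one_inv_of_left_invariant (hleft (n + k)) a
    have hb_mem := (dist_one_compMap_le hiso hr'_inv k).trans (hr'_inv k)
    have ha_mem := ha.trans (hr' k)
    have ha'_mem := ha'.trans_le ha_mem
    have hςa' := (hiso (n + k)).dist_one_map_le ha'_mem
    have hsum := sum_range_succ (fun i => e (n + i)) k
    have hstep := (hiso (n + k)).dist_map_map_inv_le (hleft (n + k + 1)) ha_mem ha'_mem hb_mem
      (hςa'.trans (by linarith [hr k]))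
    change dist (ς (n + k) _) (ς (n + k) a)⁻¹ ≤ _
    linarith

end compMap

lemma memHInf_iff {G : ℕ → Type*} [∀ n, Monoid (G n)] [∀ n, MetricSpace (G n)]
    {ς : ∀ n, G n → G (n + 1)} {g : ∀ n, G n} :
    MemHInf ς g ↔ RegularSeq g ∧
      ∀ δ : ℝ, 0 < δ → ∀ᶠ n in atTop, ∀ k, dist (g (n + k)) (compMap ς n k (g n)) < δ := by
  refine and_congr_right fun _ => forall₂_congr fun δ hδ => ?_
  rw [eventually_atTop]
  refine exists_congr fun N => forall₂_congr fun n _ => ⟨fun h k => ?_, fun h j hnj => ?_⟩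
  · rcases Nat.eq_zero_or_pos k with rfl | hk
    · simpa [compMap] using hδ
    · have hk := h (n + k) (by omega)
      rwa [sigmaComp_add] at hk
  · obtain ⟨k, rfl⟩ := Nat.exists_eq_add_of_le hnj.le
    rw [sigmaComp_add]
    exact h k

section inv

variable {G : ℕ → Type*} [∀ n, Group (G n)] [∀ n, MetricSpace (G n)] {g : ∀ n, G n}

lemma BoundedSeq.inv (hleft : ∀ n, ∀ g h k : G n, dist (g * h) (g * k) = dist h k)
    (hg : BoundedSeq g) : BoundedSeq fun n => (g n)⁻¹ := by
  obtain ⟨M, hM⟩ := hg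
  exact ⟨M, fun n => (dist_one_inv_of_left_invariant (hleft n) (g n)).trans_le (hM n)⟩

lemma BoundedSeq.regularSeq_inv (hleft : ∀ n, ∀ g h k : G n, dist (g * h) (g * k) = dist h k)
    (hequi : ∀ ε : ℝ, 0 < ε → ∃ ω : ℝ, 0 < ω ∧ ∃ N : ℕ, ∀ n, N ≤ n →
      ∀ g h : G n, dist g h < ω → dist g⁻¹ h⁻¹ < ε)
    (hg : BoundedSeq g) : RegularSeq fun n => (g n)⁻¹ := by
  refine ⟨hg.inv hleft, fun ε hε => ?_⟩
  obtain ⟨ω₂, hω₂, N₂, hN₂⟩ := hequi ε hε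
  obtain ⟨ω₁, hω₁, N₁, hN₁⟩ := hequi ω₂ hω₂
  refine ⟨ω₁, hω₁, max N₁ N₂, fun n hn h k hhk => ?_⟩
  have hinv : dist (g n * h⁻¹) (g n * k⁻¹) < ω₂ := by
    rw [hleft]
    exact hN₁ n (le_of_max_le_left hn) h k hhk
  simpa only [mul_inv_rev, inv_inv] using hN₂ n (le_of_max_le_right hn) _ _ hinv

end inv

lemma eventually_forall_sum_range_add_lt {f : ℕ → ℝ} (hf : Summable f) (hf0 : ∀ n, 0 ≤ f n)
    {δ : ℝ} (hδ : 0 < δ) : ∀ᶠ n in atTop, ∀ k, ∑ i ∈ range k, f (n + i) < δ := by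
  filter_upwards [(tendsto_order.1 (tendsto_sum_nat_add f)).2 δ hδ] with n hn k
  have htail : Summable fun i => f (i + n) := (summable_nat_add_iff n).mpr hf
  calc ∑ i ∈ range k, f (n + i) = ∑ i ∈ range k, f (i + n) := by simp only [add_comm]
    _ ≤ ∑' i, f (i + n) := htail.sum_le_tsum _ fun i _ => hf0 _
    _ < δ := hn

lemma eventually_forall_le_one_div {ε : ℕ → ℝ} (hε : ∀ n, 0 < ε n)
    (hlim : Tendsto ε atTop (nhds 0)) (C : ℝ) : ∀ᶠ n in atTop, ∀ k, C ≤ 1 / ε (n + k) := by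
  have hlim' : Tendsto ε atTop (nhdsWithin 0 (Set.Ioi 0)) :=
    tendsto_nhdsWithin_iff.2 ⟨hlim, Eventually.of_forall hε⟩
  filter_upwards [eventually_forall_ge_atTop.2 (tendsto_atTop.1 hlim'.inv_tendsto_nhdsGT_zero C)]
    with n hn k
  rw [one_div]
  exact hn (n + k) (Nat.le_add_right n k)

theorem memHInf_inv_general
    (G : ℕ → Type*) [∀ n, Group (G n)] [∀ n, MetricSpace (G n)]
    (h_left : ∀ n, ∀ g h k : G n, dist (g * h) (g * k) = dist h k)
    (h_equi : ∀ ε : ℝ, 0 < ε → ∃ ω : ℝ, 0 < ω ∧ ∃ N : ℕ, ∀ n, N ≤ n →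
      ∀ g h : G n, dist g h < ω → dist g⁻¹ h⁻¹ < ε)
    (ε : ℕ → ℝ) (hε : ∀ n, 0 < ε n)
    (ς : ∀ n, G n → G (n + 1)) (κ : ∀ n, G (n + 1) → G n)
    (h_iso : ∀ n, IsLocAlmostIsoIso (ς n) (κ n) (ε n) (1 / ε n))
    (h_sum : Summable ε)
    (g : ∀ n, G n) (hg : MemHInf ς g) :
    MemHInf ς (fun n => (g n)⁻¹) := by
  rw [memHInf_iff] at hg ⊢
  obtain ⟨⟨⟨M, hM⟩, _⟩, hcoh⟩ := hg
  refine ⟨BoundedSeq.regularSeq_inv h_left h_equi ⟨M, hM⟩, fun δ hδ => ?_⟩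
  obtain ⟨ω, hω, N, hN⟩ := h_equi (δ / 2) (by positivity)
  have hε0 : ∀ n, 0 ≤ ε n := fun n => (hε n).le
  filter_upwards [hcoh ω hω, eventually_ge_atTop N,
    eventually_forall_sum_range_add_lt h_sum hε0 (by positivity : (0 : ℝ) < δ / 6),
    eventually_forall_sum_range_add_lt h_sum hε0 one_pos,
    eventually_forall_le_one_div hε h_sum.tendsto_atTop_zero (M + 1)]
    with n hclose hn hsmall hone hradius k
  have hr : ∀ k, dist 1 (g n) + ∑ i ∈ range (k + 1), ε (n + i) ≤ 1 / ε (n + k) := fun k => by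
    linarith [hM n, hone (k + 1), hradius k]
  calc dist (g (n + k))⁻¹ (compMap ς n k (g n)⁻¹)
      ≤ dist (g (n + k))⁻¹ (compMap ς n k (g n))⁻¹
        + dist (compMap ς n k (g n)⁻¹) (compMap ς n k (g n))⁻¹ := dist_triangle_right _ _ _
    _ < δ / 2 + 3 * (δ / 6) := add_lt_add_of_lt_of_le
        (hN (n + k) (hn.trans (Nat.le_add_right n k)) _ _ (hclose k))
        ((dist_compMap_inv_le h_left h_iso hε0 hr k).trans (by linarith [hsmall k]))
    _ = δ := by ring

/-- For a sequence of proper metric groups with asymptotically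
uniformly equicontinuous inverse maps, linked by `(1/ε_n)`-local `ε_n`-almost
isometric isomorphisms with `Σ ε_n < ∞`, the set `H_∞` is closed under pointwise
inverses. -/
theorem memHInf_inv
    (G : ℕ → Type*) [∀ n, Group (G n)] [∀ n, MetricSpace (G n)]
    (h_left : ∀ n, ∀ g h k : G n, dist (g * h) (g * k) = dist h k)
    (h_cont : ∀ n, Continuous fun p : G n × G n => p.1 * p.2)
    (h_inv : ∀ n, Continuous fun g : G n => g⁻¹)
    (h_proper : ∀ n, ProperSpace (G n))
    (h_equi : ∀ ε : ℝ, 0 < ε → ∃ ω : ℝ, 0 < ω ∧ ∃ N : ℕ, ∀ n, N ≤ n →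
      ∀ g h : G n, dist g h < ω → dist g⁻¹ h⁻¹ < ε)
    (ε : ℕ → ℝ) (hε : ∀ n, 0 < ε n)
    (ς : ∀ n, G n → G (n + 1)) (κ : ∀ n, G (n + 1) → G n)
    (h_iso : ∀ n, IsLocAlmostIsoIso (ς n) (κ n) (ε n) (1 / ε n))
    (h_sum : Summable ε)
    (g : ∀ n, G n) (hg : MemHInf ς g) :
    MemHInf ς (fun n => (g n)⁻¹) :=
  memHInf_inv_general G h_left h_equi ε hε ς κ h_iso h_sum g hg
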